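/- For every n ≥ 0, the number of words L ∈ 𝓛_n with no P1-match and no P6-match (equivalently, lattice paths from (0,0) to (n,n) that stay weakly between the lines y = x − 1 and y = x + 1) equals 2^n. -/

import Mathlib

/-!
Words over the alphabet {E, N} are encoded as `List Bool`,
with `true` representing an east step `E` and `false` a north step `N`.
The word `w = w_1 ⋯ w_{2n}` corresponds to the lattice path from `(0,0)` to
`(n,n)` whose `j`-th step is east if `w_j = true` and north if `w_j = false`.
-/

/-- `w ∈ 𝓛_n`: the word `w` has exactly `n` `E`'s and `n` `N`'s. -/
def memL (n : ℕ) (w : List Bool) : Prop :=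
  w.count true = n ∧ w.count false = n

/-- The (0-indexed, increasing) list of positions at which the letter `b` occurs in `w`. -/
def occPos (w : List Bool) (b : Bool) : List ℕ :=
  (List.range w.length).filter (fun j => w.getD j (!b) == b)

/-- `ps_w({i, i+1})` (with `i` 1-indexed): the length-4 word obtained from `w` by
deleting, for each `j ∉ {i, i+1}`, the `j`-th occurrence of `E` and the `j`-th
occurrence of `N` (counted from left to right); i.e. the word formed by the
`i`-th and `(i+1)`-th occurrences of `E` and of `N`, read in their original order. -/
def pairedSubword (w : List Bool) (i : ℕ) : List Bool :=
  let keep : List ℕ := [(occPos w true).getD (i-1) 0, (occPos w true).getD i 0,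
                        (occPos w false).getD (i-1) 0, (occPos w false).getD i 0]
  ((List.range w.length).filter (fun j => keep.contains j)).map (fun j => w.getD j true)

/-- `P`-mch(w): the number of paired steps `i` with `1 ≤ i ≤ n-1` at which the
paired pattern `P` matches in `w ∈ 𝓛_n`. -/
def pmch (n : ℕ) (P w : List Bool) : ℕ :=
  ((Finset.Icc 1 (n-1)).filter (fun i => pairedSubword w i = P)).card

def P1 : List Bool := [true, true, false, false]   -- EENN
def P2 : List Bool := [true, false, true, false]   -- ENEN
def P3 : List Bool := [false, true, true, false]   -- NEEN
def P4 : List Bool := [true, false, false, true]   -- ENNE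
def P5 : List Bool := [false, true, false, true]   -- NENE
def P6 : List Bool := [false, false, true, true]   -- NNEE

/-!
At paired step `i`, the letters read are the `i`-th and `(i+1)`-st `E` and `N`. The pattern is
`EENN` exactly when the `(i+1)`-st `E` precedes the `i`-th `N`, and `NNEE` when the `(i+1)`-st `N`
precedes the `i`-th `E`. Avoiding both therefore says that the `k`-th `E` and `N` both
precede the `(k+1)`-st `E` and `N`; since all `2n` positions are used, the `k`-th `E`
and the `k`-th `N` are forced onto the `k`-th block of two letters. So the avoiding words are
the concatenations of `n` blocks `EN` or `NE`, and there are `2^n` of them.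
-/

lemma occPos_cons (a : Bool) (w : List Bool) (b : Bool) :
    occPos (a :: w) b = (if a = b then [0] else []) ++ (occPos w b).map (· + 1) := by
  unfold occPos
  rw [List.length_cons, List.range_succ_eq_map, List.filter_cons, List.filter_map]
  simp only [List.getD_cons_zero, Function.comp_def, List.getD_cons_succ]
  split <;> simp_all

lemma length_occPos (w : List Bool) (b : Bool) : (occPos w b).length = w.count b := by
  induction w with
  | nil => rfl
  | cons a w ih => rw [occPos_cons, List.count_cons]; cases a <;> cases b <;> simp_all

lemma length_eq_of_memL {n : ℕ} {w : List Bool} (hw : memL n w) : w.length = 2 * n := by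
  rw [← List.count_true_add_count_false, hw.1, hw.2, two_mul]

/-- The position of the `(k+1)`-st occurrence of `b` in `w`: both `k` and the position are
0-indexed, so `pairedSubword w i` reads the letters at `nthOcc w _ (i - 1)` and `nthOcc w _ i`. -/
def nthOcc (w : List Bool) (b : Bool) (k : ℕ) : ℕ := (occPos w b).getD k 0

section nthOcc

variable {w : List Bool} {b : Bool} {k l : ℕ}

lemma nthOcc_eq_getElem (hk : k < w.count b) :
    nthOcc w b k = (occPos w b)[k]'(by rwa [length_occPos]) :=
  List.getD_eq_getElem _ _ _

lemma nthOcc_mem (hk : k < w.count b) :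
    nthOcc w b k < w.length ∧ w.getD (nthOcc w b k) (!b) = b := by
  have h := List.getElem_mem (l := occPos w b) (n := k) (by rwa [length_occPos])
  rw [← nthOcc_eq_getElem hk, occPos, List.mem_filter, List.mem_range, beq_iff_eq] at h
  exact h

lemma nthOcc_lt_length (hk : k < w.count b) : nthOcc w b k < w.length :=
  (nthOcc_mem hk).1

lemma getD_nthOcc (hk : k < w.count b) (d : Bool) : w.getD (nthOcc w b k) d = b := by
  have h := (nthOcc_mem hk).2
  rwa [List.getD_eq_getElem _ _ (nthOcc_lt_length hk)] at h ⊢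

lemma nthOcc_lt_nthOcc (hkl : k < l) (hl : l < w.count b) : nthOcc w b k < nthOcc w b l := by
  rw [nthOcc_eq_getElem (hkl.trans hl), nthOcc_eq_getElem hl]
  exact List.pairwise_iff_getElem.mp (List.pairwise_lt_range.filter _) _ _ _ _ hkl

lemma nthOcc_true_ne_nthOcc_false (hk : k < w.count true) (hl : l < w.count false) :
    nthOcc w true k ≠ nthOcc w false l := by
  intro h
  have := getD_nthOcc hk true
  rw [h, getD_nthOcc hl] at this
  exact Bool.false_ne_true this

end nthOcc

lemma pmch_eq_zero_iff {n : ℕ} {P w : List Bool} :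
    pmch n P w = 0 ↔ ∀ i, 1 ≤ i → i < n → pairedSubword w i ≠ P := by
  simp only [pmch, Finset.card_eq_zero, Finset.filter_eq_empty_iff, Finset.mem_Icc]
  exact forall_congr' fun i => ⟨fun h h1 h2 => h ⟨h1, by omega⟩, fun h hi => h hi.1 (by omega)⟩

lemma pairedSubword_eq_map {w : List Bool} {i : ℕ} (l : List ℕ) (hl : l.Pairwise (· < ·))
    (hlt : ∀ j ∈ l, j < w.length)
    (hmem : ∀ j, j ∈ l ↔ j = nthOcc w true (i - 1) ∨ j = nthOcc w true i ∨
      j = nthOcc w false (i - 1) ∨ j = nthOcc w false i) :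
    pairedSubword w i = l.map (w.getD · true) := by
  dsimp only [pairedSubword]
  congr 1
  refine (List.pairwise_lt_range.filter _).eq_of_mem_iff hl fun j => ?_
  simp only [List.mem_filter, List.mem_range, List.contains_iff_mem, List.mem_cons,
    List.not_mem_nil, or_false]
  exact ⟨fun h => (hmem j).2 h.2, fun h => ⟨hlt j h, (hmem j).1 h⟩⟩

lemma pairedSubword_eq_of_lt {n i : ℕ} {w : List Bool} (hw : memL n w) (hi : 1 ≤ i)
    (hin : i < n) (b : Bool) (h : nthOcc w b i < nthOcc w (!b) (i - 1)) :
    pairedSubword w i = [b, b, !b, !b] := by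
  have hb : w.count b = n := by cases b; exacts [hw.2, hw.1]
  have hnb : w.count (!b) = n := by cases b; exacts [hw.1, hw.2]
  have hb_lt := nthOcc_lt_nthOcc (w := w) (b := b) (k := i - 1) (l := i) (by omega) (by omega)
  have hnb_lt := nthOcc_lt_nthOcc (w := w) (b := !b) (k := i - 1) (l := i) (by omega) (by omega)
  rw [pairedSubword_eq_map [nthOcc w b (i - 1), nthOcc w b i, nthOcc w (!b) (i - 1),
    nthOcc w (!b) i]]
  · simp only [List.map_cons, List.map_nil, getD_nthOcc (by omega : i - 1 < w.count b),
      getD_nthOcc (by omega : i < w.count b), getD_nthOcc (by omega : i - 1 < w.count (!b)),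
      getD_nthOcc (by omega : i < w.count (!b))]
  · simp only [List.pairwise_cons, List.mem_cons, List.not_mem_nil]
    grind
  · intro j hj
    have := nthOcc_lt_length (w := w) (b := !b) (k := i) (by omega)
    simp only [List.mem_cons, List.not_mem_nil, or_false] at hj
    omega
  · intro j
    cases b <;> grind

/-- The lower bound `2k ≤ min (e k) (f k)` propagates upwards from `k = 0`, the upper bound
`max (e k) (f k) ≤ 2k + 1` downwards from `k = n - 1`. -/
lemma div_two_eq_of_max_lt_min {n : ℕ} {e f : ℕ → ℕ} (hne : ∀ k < n, e k ≠ f k)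
    (hlt : ∀ k, k + 1 < n → max (e k) (f k) < min (e (k + 1)) (f (k + 1)))
    (hbound : ∀ k < n, max (e k) (f k) < 2 * n) {k : ℕ} (hk : k < n) :
    e k / 2 = k ∧ f k / 2 = k := by
  have lower : ∀ k < n, 2 * k ≤ min (e k) (f k) := by
    intro k hk
    induction k with
    | zero => omega
    | succ k ih =>
      have := ih (by omega)
      have := hlt k hk
      have := hne k (by omega)
      omega
  have upper : ∀ j k, k + 1 + j = n → max (e k) (f k) ≤ 2 * k + 1 := by
    intro j
    induction j with
    | zero => intro k hk; have := hbound k (by omega); omega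
    | succ j ih =>
      intro k hk
      have := ih (k + 1) (by omega)
      have := hlt k (by omega)
      have := hne (k + 1) (by omega)
      omega
  have := lower k hk
  have := upper (n - 1 - k) k (by omega)
  omega

/-- The `k`-th `E` and the `k`-th `N` occupy the letters `2k` and `2k + 1` (0-indexed), for
every `k < n`: the path stays between the lines `y = x - 1` and `y = x + 1`. -/
def InStrip (n : ℕ) (w : List Bool) : Prop :=
  ∀ k < n, nthOcc w true k / 2 = k ∧ nthOcc w false k / 2 = k

lemma inStrip_of_pmch_eq_zero {n : ℕ} {w : List Bool} (hw : memL n w) (h1 : pmch n P1 w = 0)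
    (h6 : pmch n P6 w = 0) : InStrip n w := by
  have ht := hw.1
  have hf := hw.2
  intro k hk
  refine div_two_eq_of_max_lt_min (e := nthOcc w true) (f := nthOcc w false)
    (fun m hm => nthOcc_true_ne_nthOcc_false (by omega) (by omega)) (fun m hm => ?_)
    (fun m hm => ?_) hk
  · have hP1 : ¬ nthOcc w true (m + 1) < nthOcc w false m := fun h =>
      pmch_eq_zero_iff.mp h1 (m + 1) (by omega) hm
        (pairedSubword_eq_of_lt hw (by omega) hm true h)
    have hP6 : ¬ nthOcc w false (m + 1) < nthOcc w true m := fun h =>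
      pmch_eq_zero_iff.mp h6 (m + 1) (by omega) hm
        (pairedSubword_eq_of_lt hw (by omega) hm false h)
    have := nthOcc_lt_nthOcc (w := w) (b := true) (Nat.lt_add_one m) (by omega)
    have := nthOcc_lt_nthOcc (w := w) (b := false) (Nat.lt_add_one m) (by omega)
    have := nthOcc_true_ne_nthOcc_false (w := w) (k := m + 1) (l := m) (by omega) (by omega)
    have := nthOcc_true_ne_nthOcc_false (w := w) (k := m) (l := m + 1) (by omega) (by omega)
    omega
  · have := nthOcc_lt_length (w := w) (b := true) (k := m) (by omega)
    have := nthOcc_lt_length (w := w) (b := false) (k := m) (by omega)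
    have := length_eq_of_memL hw
    omega

section InStrip

variable {n : ℕ} {w : List Bool}

lemma nthOcc_eq_of_inStrip (hw : memL n w) (hs : InStrip n w) {k : ℕ} (hk : k < n) :
    nthOcc w true k = 2 * k ∧ nthOcc w false k = 2 * k + 1 ∨
      nthOcc w true k = 2 * k + 1 ∧ nthOcc w false k = 2 * k := by
  have := hs k hk
  have := nthOcc_true_ne_nthOcc_false (w := w) (k := k) (l := k) (by rw [hw.1]; omega)
    (by rw [hw.2]; omega)
  omega

lemma getD_succ_ne_of_inStrip (hw : memL n w) (hs : InStrip n w) {k : ℕ} (hk : k < n) :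
    w.getD (2 * k + 1) true ≠ w.getD (2 * k) true := by
  have ht := getD_nthOcc (w := w) (k := k) (b := true) (by rw [hw.1]; omega) true
  have hf := getD_nthOcc (w := w) (k := k) (b := false) (by rw [hw.2]; omega) true
  rcases nthOcc_eq_of_inStrip hw hs hk with ⟨het, hef⟩ | ⟨het, hef⟩ <;> simp_all

lemma pairedSubword_of_inStrip (hw : memL n w) (hs : InStrip n w) {i : ℕ} (hi : 1 ≤ i)
    (hin : i < n) : pairedSubword w i = (List.range' (2 * (i - 1)) 4).map (w.getD · true) := by
  have := nthOcc_eq_of_inStrip hw hs (k := i - 1) (by omega)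
  have := nthOcc_eq_of_inStrip hw hs hin
  have := length_eq_of_memL hw
  refine pairedSubword_eq_map _ List.pairwise_lt_range' (fun j hj => ?_) fun j => ?_ <;>
    simp only [List.mem_range'_1] at * <;> omega

lemma pmch_eq_zero_of_inStrip (hw : memL n w) (hs : InStrip n w) :
    pmch n P1 w = 0 ∧ pmch n P6 w = 0 := by
  have key : ∀ i, 1 ≤ i → i < n → ∀ b : Bool, pairedSubword w i ≠ [b, b, !b, !b] := by
    intro i hi hin b h
    rw [pairedSubword_of_inStrip hw hs hi hin] at h
    simp only [List.range'_succ, List.range'_zero, List.map_cons, List.map_nil,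
      List.cons.injEq] at h
    exact getD_succ_ne_of_inStrip hw hs (k := i - 1) (by omega) (h.2.1.trans h.1.symm)
  exact ⟨pmch_eq_zero_iff.mpr fun i hi hin => key i hi hin true,
    pmch_eq_zero_iff.mpr fun i hi hin => key i hi hin false⟩

end InStrip

def blockWord : List Bool → List Bool
  | [] => []
  | b :: bs => b :: (!b) :: blockWord bs

lemma blockWord_injective : Function.Injective blockWord := by
  intro bs cs h
  induction bs generalizing cs with
  | nil => cases cs <;> simp_all [blockWord]
  | cons b bs ih =>
    cases cs with
    | nil => simp [blockWord] at h
    | cons c cs =>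
      simp only [blockWord, List.cons.injEq] at h
      rw [h.1, ih h.2.2]

lemma count_blockWord (bs : List Bool) (c : Bool) : (blockWord bs).count c = bs.length := by
  induction bs with
  | nil => rfl
  | cons b bs ih => cases b <;> cases c <;> simp_all [blockWord]

lemma memL_blockWord (bs : List Bool) : memL bs.length (blockWord bs) :=
  ⟨count_blockWord bs true, count_blockWord bs false⟩

lemma occPos_blockWord_cons (b : Bool) (bs : List Bool) (c : Bool) :
    occPos (blockWord (b :: bs)) c
      = (if b = c then 0 else 1) :: (occPos (blockWord bs) c).map (· + 2) := by
  rw [blockWord, occPos_cons, occPos_cons]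
  cases b <;> cases c <;> simp [Function.comp_def, List.map_map]

lemma nthOcc_blockWord_cons_succ (b : Bool) {bs : List Bool} (c : Bool) {k : ℕ}
    (hk : k < bs.length) :
    nthOcc (blockWord (b :: bs)) c (k + 1) = nthOcc (blockWord bs) c k + 2 := by
  have hlen : k < (occPos (blockWord bs) c).length := by rwa [length_occPos, count_blockWord]
  simp [nthOcc, occPos_blockWord_cons, hlen]

lemma inStrip_blockWord (bs : List Bool) : InStrip bs.length (blockWord bs) := by
  induction bs with
  | nil => intro k hk; simp at hk
  | cons b bs ih =>
    rintro (_ | k) hk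
    · simp only [nthOcc, occPos_blockWord_cons, List.getD_cons_zero]
      split_ifs <;> simp_all
    · have hk : k < bs.length := by simpa using hk
      have := ih k hk
      rw [nthOcc_blockWord_cons_succ _ _ hk, nthOcc_blockWord_cons_succ _ _ hk]
      omega

lemma exists_blockWord_eq : ∀ w : List Bool, Even w.length →
    (∀ k, 2 * k + 1 < w.length → w.getD (2 * k + 1) true ≠ w.getD (2 * k) true) →
    ∃ bs, blockWord bs = w
  | [], _, _ => ⟨[], rfl⟩
  | [_], h, _ => by simp at h
  | a :: b :: w, hev, hne => by
    obtain ⟨bs, hbs⟩ := exists_blockWord_eq w (by simpa [Nat.even_add_one] using hev)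
      fun k hk => by simpa [Nat.mul_succ] using hne (k + 1) (by simp; omega)
    have hba : b = !a := Bool.eq_not.mpr (by simpa using hne 0 (by simp))
    exact ⟨a :: bs, by rw [blockWord, hbs, hba]⟩

lemma avoiding_eq_image_blockWord (n : ℕ) :
    {w : List Bool | memL n w ∧ pmch n P1 w = 0 ∧ pmch n P6 w = 0}
      = blockWord '' {bs | bs.length = n} := by
  ext w
  constructor
  · rintro ⟨hw, h1, h6⟩
    have hs := inStrip_of_pmch_eq_zero hw h1 h6
    have hlen := length_eq_of_memL hw
    obtain ⟨bs, rfl⟩ := exists_blockWord_eq w ⟨n, by omega⟩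
      fun k hk => getD_succ_ne_of_inStrip hw hs (by omega)
    exact ⟨bs, (count_blockWord bs true).symm.trans hw.1, rfl⟩
  · rintro ⟨bs, rfl, rfl⟩
    exact ⟨memL_blockWord bs, pmch_eq_zero_of_inStrip (memL_blockWord bs) (inStrip_blockWord bs)⟩

lemma ncard_setOf_length_eq (α : Type*) [Fintype α] (n : ℕ) :
    {l : List α | l.length = n}.ncard = Fintype.card α ^ n := by
  rw [← Nat.card_coe_set_eq]
  exact (Nat.card_eq_fintype_card (α := List.Vector α n)).trans (card_vector n)

theorem count_P1_and_P6_avoiding (n : ℕ) :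
    {w : List Bool | memL n w ∧ pmch n P1 w = 0 ∧ pmch n P6 w = 0}.ncard = 2^n := by
  rw [avoiding_eq_image_blockWord, Set.ncard_image_of_injective _ blockWord_injective,
    ncard_setOf_length_eq, Fintype.card_bool]
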